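/- Suppose f is worst-case monotone and worst-case submodular, and f(φ) = Q for every φ ∈ U. Let ψ be a partial realization consistent with some realization in U such that f(ψ) < Q, and let e ∈ E \ dom(ψ) be an item maximizing Δwc(e|ψ)/c(e) over E \ dom(ψ). Then for every adaptive policy π* that covers Q (i.e., f(ψ(π*,φ)) ≥ Q for every φ ∈ U), c(e) ≤ c_wc(π*); that is, the cost of every item selected by the worst-case density-greedy policy is at most the worst-case cost of any covering policy. -/

import Mathlib

namespace WCAS

variable {ι O : Type*}

/-- The domain of a partial realization `ψ : ι → Option O`. -/
def dom (ψ : ι → Option O) : Set ι := {e | ψ e ≠ none}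

/-- A (full) realization `φ` is consistent with a partial realization `ψ`. -/
def consistent (φ : ι → O) (ψ : ι → Option O) : Prop :=
  ∀ e o, ψ e = some o → φ e = o

/-- `ψ` is a subrealization of `ψ'` (written `ψ ⊆ ψ'`). -/
def subreal (ψ ψ' : ι → Option O) : Prop :=
  ∀ e o, ψ e = some o → ψ' e = some o

/-- Extend a partial realization `ψ` by observing state `o` for item `e`. -/
def extendPR [DecidableEq ι] (ψ : ι → Option O) (e : ι) (o : O) : ι → Option O :=
  fun x => if x = e then some o else ψ x

/-- The empty partial realization. -/
def emptyPR : ι → Option O := fun _ => none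

/-- View a full realization as a partial realization with full domain. -/
def toPR (φ : ι → O) : ι → Option O := fun e => some (φ e)

/-- `O(e, ψ)`: the set of possible states of item `e` given observation `ψ`,
with respect to the set `U` of possible realizations. -/
def Ostates (U : Set (ι → O)) (e : ι) (ψ : ι → Option O) : Set O :=
  {o | ∃ φ ∈ U, consistent φ ψ ∧ φ e = o}

/-- The worst-case marginal utility `Δwc(e | ψ)` of item `e` on top of `ψ`. -/
noncomputable def Dwc [DecidableEq ι] (f : (ι → Option O) → ℝ) (U : Set (ι → O))
    (e : ι) (ψ : ι → Option O) : ℝ :=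
  sInf ((fun o => f (extendPR ψ e o) - f ψ) '' Ostates U e ψ)

/-- `f` is worst-case monotone. -/
def WCMonotone [DecidableEq ι] (f : (ι → Option O) → ℝ) (U : Set (ι → O)) : Prop :=
  ∀ ψ : ι → Option O, (∃ φ ∈ U, consistent φ ψ) →
    ∀ e, e ∉ dom ψ → 0 ≤ Dwc f U e ψ

/-- `f` is worst-case submodular. -/
def WCSubmodular [DecidableEq ι] (f : (ι → Option O) → ℝ) (U : Set (ι → O)) : Prop :=
  ∀ ψ ψ' : ι → Option O, subreal ψ ψ' → (∃ φ ∈ U, consistent φ ψ') →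
    ∀ e, e ∉ dom ψ' → Dwc f U e ψ' ≤ Dwc f U e ψ

/-- An adaptive policy maps each observation either to an item outside its
domain or to `none` (stop). -/
def ValidPolicy (π : (ι → Option O) → Option ι) : Prop :=
  ∀ ψ e, π ψ = some e → ψ e = none

/-- One step of executing policy `π` under realization `φ`. -/
def stepPolicy [DecidableEq ι] (π : (ι → Option O) → Option ι) (φ : ι → O)
    (ψ : ι → Option O) : ι → Option O :=
  match π ψ with
  | none => ψ
  | some e => extendPR ψ e (φ e)

/-- Executing policy `π` under realization `φ` for `n` steps, starting from the
empty observation. -/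
def runPolicy [DecidableEq ι] (π : (ι → Option O) → Option ι) (φ : ι → O) :
    ℕ → ι → Option O
  | 0 => emptyPR
  | n + 1 => stepPolicy π φ (runPolicy π φ n)

/-- The final partial realization `ψ(π, φ)` produced by executing `π` under `φ`
(a valid policy over a finite ground set terminates within `card ι` steps). -/
def finalPR [DecidableEq ι] [Fintype ι] (π : (ι → Option O) → Option ι) (φ : ι → O) :
    ι → Option O :=
  runPolicy π φ (Fintype.card ι)

open scoped Classical in
/-- The total cost `c(dom ψ)` of the items in the domain of `ψ`. -/
noncomputable def costPR [Fintype ι] (c : ι → ℝ) (ψ : ι → Option O) : ℝ :=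
  ∑ e : ι, if (ψ e).isSome then c e else 0

/-- The worst-case cost `c_wc(π) = max_{φ ∈ U} c(dom ψ(π, φ))`. -/
noncomputable def cwc [DecidableEq ι] [Fintype ι] (c : ι → ℝ) (U : Set (ι → O))
    (π : (ι → Option O) → Option ι) : ℝ :=
  sSup ((fun φ => costPR c (finalPR π φ)) '' U)

/-- The worst-case utility `f_wc(π) = min_{φ ∈ U} f(ψ(π, φ))`. -/
noncomputable def fwc [DecidableEq ι] [Fintype ι] (f : (ι → Option O) → ℝ)
    (U : Set (ι → O)) (π : (ι → Option O) → Option ι) : ℝ :=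
  sInf ((fun φ => f (finalPR π φ)) '' U)

/-- `ψ` is reachable by executing `π` under some realization in `U`. -/
def Reachable [DecidableEq ι] (π : (ι → Option O) → Option ι) (U : Set (ι → O))
    (ψ : ι → Option O) : Prop :=
  ∃ φ ∈ U, ∃ n, runPolicy π φ n = ψ

/-- Policy `π` covers the goal value `Q`: under every realization in `U`,
its final observation has utility at least `Q`. -/
def Covers [DecidableEq ι] [Fintype ι] (f : (ι → Option O) → ℝ) (U : Set (ι → O))
    (π : (ι → Option O) → Option ι) (Q : ℝ) : Prop :=
  ∀ φ ∈ U, Q ≤ f (finalPR π φ)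

/-- The worst-case density-greedy policy for the cover problem with goal `Q`:
it stops at observations with `f ψ ≥ Q`, and at any reachable observation with
`f ψ < Q` it selects an item maximizing `Δwc(e | ψ) / c(e)`. -/
def CoverGreedy [DecidableEq ι] [Fintype ι] (f : (ι → Option O) → ℝ)
    (U : Set (ι → O)) (c : ι → ℝ) (Q : ℝ) (π : (ι → Option O) → Option ι) : Prop :=
  ValidPolicy π ∧
  (∀ ψ : ι → Option O, Q ≤ f ψ → π ψ = none) ∧
  (∀ ψ : ι → Option O, Reachable π U ψ → f ψ < Q →
    ∃ e, e ∉ dom ψ ∧ π ψ = some e ∧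
      ∀ e', e' ∉ dom ψ → Dwc f U e' ψ / c e' ≤ Dwc f U e ψ / c e)

/-- The budgeted worst-case density-greedy policy: at any reachable observation
it picks a density-maximizing item and selects it if the budget permits,
stopping otherwise. -/
def BudgetGreedy [DecidableEq ι] [Fintype ι] (f : (ι → Option O) → ℝ)
    (U : Set (ι → O)) (c : ι → ℝ) (B : ℝ) (π : (ι → Option O) → Option ι) : Prop :=
  ValidPolicy π ∧
  ∀ ψ : ι → Option O, Reachable π U ψ → dom ψ ≠ Set.univ →
    ∃ e, e ∉ dom ψ ∧
      (∀ e', e' ∉ dom ψ → Dwc f U e' ψ / c e' ≤ Dwc f U e ψ / c e) ∧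
      ((costPR c ψ + c e ≤ B ∧ π ψ = some e) ∨ (B < costPR c ψ + c e ∧ π ψ = none))

/-- The relaxed budgeted worst-case density-greedy policy: it keeps selecting
density-maximizing items while the cost spent so far is within the budget
(thus also selecting the first item that makes the total cost exceed the
budget), and stops once the budget has been exceeded. -/
def RelaxedBudgetGreedy [DecidableEq ι] [Fintype ι] (f : (ι → Option O) → ℝ)
    (U : Set (ι → O)) (c : ι → ℝ) (B : ℝ) (π : (ι → Option O) → Option ι) : Prop :=
  ValidPolicy π ∧
  (∀ ψ : ι → Option O, Reachable π U ψ → B < costPR c ψ → π ψ = none) ∧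
  (∀ ψ : ι → Option O, Reachable π U ψ → costPR c ψ ≤ B → dom ψ ≠ Set.univ →
    ∃ e, e ∉ dom ψ ∧ π ψ = some e ∧
      ∀ e', e' ∉ dom ψ → Dwc f U e' ψ / c e' ≤ Dwc f U e ψ / c e)

/-!
Let `ρ = Δwc(e|ψ) / c(e)` be the greedy density at `ψ`. An adversary runs `πs` on top of `ψ`,
revealing for every item `a` that `πs` selects the state that is worst for `f` given `ψ` and
everything observed so far. By worst-case submodularity each step raises `f` by at most
`Δwc(a|ψ) ≤ ρ c(a)`, so after the run `χ` we get `f(ψ ∪ χ) - f(ψ) ≤ ρ c(χ)`. As `πs` covers `Q`,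
monotonicity gives `Q ≤ f(ψ ∪ χ)`; and `Δwc(e|ψ) ≤ Q - f(ψ)` because every realization has
value `Q`. Hence `(Q - f ψ) c(e) ≤ Δwc(e|ψ) c(χ) ≤ (Q - f ψ) c(χ)`, i.e. `c(e) ≤ c(χ) ≤ c_wc(πs)`.
-/

section PartialRealization

variable {φ : ι → O} {ψ ψ' χ : ι → Option O}

lemma dom_subset_of_subreal (h : subreal ψ ψ') : dom ψ ⊆ dom ψ' := by
  intro x hx
  obtain ⟨o, ho⟩ := Option.ne_none_iff_exists'.mp hx
  simp [dom, h x o ho]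

lemma consistent_of_subreal (h : subreal ψ ψ') (hφ : consistent φ ψ') : consistent φ ψ :=
  fun x o hx => hφ x o (h x o hx)

lemma consistent_toPR (φ : ι → O) : consistent φ (toPR φ) :=
  fun _ _ h => Option.some.inj h

lemma subreal_toPR (h : consistent φ ψ) : subreal ψ (toPR φ) :=
  fun x o hx => congrArg some (h x o hx)

def unionPR (ψ χ : ι → Option O) : ι → Option O := fun x => (χ x).or (ψ x)

lemma subreal_unionPR_right (ψ χ : ι → Option O) : subreal χ (unionPR ψ χ) := by
  intro x o hx
  simp [unionPR, hx]

lemma subreal_unionPR_left (hψ : consistent φ ψ) (hχ : consistent φ χ) :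
    subreal ψ (unionPR ψ χ) := by
  intro x o hx
  cases hχx : χ x with
  | none => simp [unionPR, hχx, hx]
  | some o' => simp [unionPR, hχx, ← hχ x o' hχx, hψ x o hx]

lemma consistent_unionPR (hψ : consistent φ ψ) (hχ : consistent φ χ) :
    consistent φ (unionPR ψ χ) := by
  intro x o hx
  cases hχx : χ x with
  | none => simp only [unionPR, hχx, Option.none_or] at hx; exact hψ x o hx
  | some o' => simp only [unionPR, hχx, Option.some_or] at hx; exact hχ x o (hx ▸ hχx)

variable [DecidableEq ι]

lemma consistent_extendPR (h : consistent φ ψ) (a : ι) :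
    consistent φ (extendPR ψ a (φ a)) := by
  intro x o hx
  by_cases hxa : x = a
  · subst hxa
    simpa [extendPR] using hx
  · simp only [extendPR, if_neg hxa] at hx
    exact h x o hx

lemma extendPR_eq_self (h : consistent φ ψ) {a : ι} (ha : a ∈ dom ψ) :
    extendPR ψ a (φ a) = ψ := by
  obtain ⟨o, ho⟩ := Option.ne_none_iff_exists'.mp ha
  funext x
  by_cases hxa : x = a
  · subst hxa
    simp [extendPR, ho, h x o ho]
  · simp [extendPR, hxa]

lemma unionPR_extendPR (ψ χ : ι → Option O) (a : ι) (o : O) :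
    unionPR ψ (extendPR χ a o) = extendPR (unionPR ψ χ) a o := by
  funext x
  by_cases hxa : x = a <;> simp [unionPR, extendPR, hxa]

end PartialRealization

section Run

variable [DecidableEq ι] {π : (ι → Option O) → Option ι} {φ φ' : ι → O} {n : ℕ} {a : ι}

lemma runPolicy_succ_of_eq_none (h : π (runPolicy π φ n) = none) :
    runPolicy π φ (n + 1) = runPolicy π φ n := by
  simp [runPolicy, stepPolicy, h]

lemma runPolicy_succ_of_eq_some (h : π (runPolicy π φ n) = some a) :
    runPolicy π φ (n + 1) = extendPR (runPolicy π φ n) a (φ a) := by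
  simp [runPolicy, stepPolicy, h]

lemma consistent_runPolicy (π : (ι → Option O) → Option ι) (φ : ι → O) :
    ∀ n, consistent φ (runPolicy π φ n)
  | 0 => fun _ _ h => by simp [runPolicy, emptyPR] at h
  | n + 1 => by
    cases h : π (runPolicy π φ n) with
    | none => rw [runPolicy_succ_of_eq_none h]; exact consistent_runPolicy π φ n
    | some a =>
      rw [runPolicy_succ_of_eq_some h]
      exact consistent_extendPR (consistent_runPolicy π φ n) a

lemma subreal_runPolicy_succ (hπ : ValidPolicy π) (φ : ι → O) (n : ℕ) :
    subreal (runPolicy π φ n) (runPolicy π φ (n + 1)) := by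
  intro x o hx
  cases h : π (runPolicy π φ n) with
  | none => rwa [runPolicy_succ_of_eq_none h]
  | some a =>
    have hxa : x ≠ a := by
      rintro rfl
      simp [hπ _ _ h] at hx
    simpa [runPolicy_succ_of_eq_some h, extendPR, hxa] using hx

lemma runPolicy_congr (hπ : ValidPolicy π) :
    ∀ n, consistent φ' (runPolicy π φ n) → runPolicy π φ' n = runPolicy π φ n
  | 0, _ => rfl
  | n + 1, h => by
    have ih := runPolicy_congr hπ n (consistent_of_subreal (subreal_runPolicy_succ hπ φ n) h)
    cases hs : π (runPolicy π φ n) with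
    | none =>
      rw [runPolicy_succ_of_eq_none hs, runPolicy_succ_of_eq_none (by rwa [ih]), ih]
    | some a =>
      rw [runPolicy_succ_of_eq_some hs] at h ⊢
      rw [runPolicy_succ_of_eq_some (by rwa [ih]), ih, h a (φ a) (by simp [extendPR])]

end Run

section Marginal

variable [DecidableEq ι] [Finite O] {f : (ι → Option O) → ℝ} {U : Set (ι → O)}
  {φ : ι → O} {ψ : ι → Option O}

lemma Dwc_le (hφ : φ ∈ U) (hψ : consistent φ ψ) (a : ι) :
    Dwc f U a ψ ≤ f (extendPR ψ a (φ a)) - f ψ :=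
  csInf_le ((Set.toFinite _).image _).bddBelow ⟨φ a, ⟨φ, hφ, hψ, rfl⟩, rfl⟩

lemma exists_extendPR_sub_eq_Dwc (hφ : φ ∈ U) (hψ : consistent φ ψ) (a : ι) :
    ∃ φ' ∈ U, consistent φ' ψ ∧ f (extendPR ψ a (φ' a)) - f ψ = Dwc f U a ψ := by
  have hne : ((fun o => f (extendPR ψ a o) - f ψ) '' Ostates U a ψ).Nonempty :=
    ⟨_, ⟨φ a, ⟨φ, hφ, hψ, rfl⟩, rfl⟩⟩
  obtain ⟨_, ⟨φ', hφ', hψφ', rfl⟩, hval⟩ := hne.csInf_mem ((Set.toFinite _).image _)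
  exact ⟨φ', hφ', hψφ', hval⟩

lemma WCMonotone.le_extendPR (hmono : WCMonotone f U) (hφ : φ ∈ U) (hψ : consistent φ ψ)
    (a : ι) : f ψ ≤ f (extendPR ψ a (φ a)) := by
  by_cases ha : a ∈ dom ψ
  · rw [extendPR_eq_self hψ ha]
  · linarith [hmono ψ ⟨φ, hφ, hψ⟩ a ha, Dwc_le (f := f) hφ hψ a]

lemma WCMonotone.le_of_subreal [Finite ι] (hmono : WCMonotone f U) (hφ : φ ∈ U)
    {ψ' : ι → Option O} (hψ : consistent φ ψ) (hψ' : consistent φ ψ') (h : subreal ψ ψ') :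
    f ψ ≤ f ψ' := by
  classical
  let reveal : Finset ι → ι → Option O := fun s x => if x ∈ s then some (φ x) else ψ x
  have hreveal : ∀ s, consistent φ (reveal s) ∧ f ψ ≤ f (reveal s) := by
    intro s
    induction s using Finset.induction_on with
    | empty => exact ⟨by simpa [reveal] using hψ, by simp [reveal]⟩
    | insert a s _ ih =>
      have hinsert : reveal (insert a s) = extendPR (reveal s) a (φ a) := by
        funext x
        by_cases hxa : x = a <;> simp [reveal, extendPR, hxa]
      rw [hinsert]
      exact ⟨consistent_extendPR ih.1 a, ih.2.trans (hmono.le_extendPR hφ ih.1 a)⟩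
  have hψ'_eq : reveal (Set.toFinite (dom ψ')).toFinset = ψ' := by
    funext x
    by_cases hx : x ∈ dom ψ'
    · obtain ⟨o, ho⟩ := Option.ne_none_iff_exists'.mp hx
      simp [reveal, hx, ho, hψ' x o ho]
    · have hxψ : x ∉ dom ψ := fun hxψ => hx (dom_subset_of_subreal h hxψ)
      simp only [dom, Set.mem_ofPred_eq, not_not] at hx hxψ
      simp [reveal, dom, hx, hxψ]
  exact hψ'_eq ▸ (hreveal _).2

lemma Dwc_le_sub_of_toPR_eq [Finite ι] (hmono : WCMonotone f U) {Q : ℝ}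
    (hfull : ∀ φ ∈ U, f (toPR φ) = Q) (hψ : ∃ φ ∈ U, consistent φ ψ) (a : ι) :
    Dwc f U a ψ ≤ Q - f ψ := by
  obtain ⟨φ, hφ, hψφ⟩ := hψ
  have hext := consistent_extendPR hψφ a
  have := hmono.le_of_subreal hφ hext (consistent_toPR φ) (subreal_toPR hext)
  linarith [Dwc_le (f := f) hφ hψφ a, hfull φ hφ]

end Marginal

section Cost

variable [Fintype ι] {c : ι → ℝ}

lemma costPR_nonneg (hc : ∀ a, 0 ≤ c a) (χ : ι → Option O) : 0 ≤ costPR c χ :=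
  Finset.sum_nonneg fun x _ => by split <;> simp [hc x]

lemma costPR_extendPR [DecidableEq ι] {χ : ι → Option O} {a : ι} (ha : χ a = none) (o : O) :
    costPR c (extendPR χ a o) = costPR c χ + c a := by
  rw [← sub_eq_iff_eq_add', costPR, costPR, ← Finset.sum_sub_distrib,
    Finset.sum_eq_single a]
  · simp [extendPR, ha]
  · intro b _ hb
    simp [extendPR, hb]
  · simp

lemma costPR_finalPR_le_cwc [DecidableEq ι] [Finite O] {U : Set (ι → O)}
    {π : (ι → Option O) → Option ι} {φ : ι → O} (hφ : φ ∈ U) :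
    costPR c (finalPR π φ) ≤ cwc c U π :=
  le_csSup ((Set.toFinite U).image _).bddAbove ⟨φ, hφ, rfl⟩

end Cost

section Adversary

variable [DecidableEq ι] [Finite O] {f : (ι → Option O) → ℝ} {U : Set (ι → O)}
  {c : ι → ℝ} {ρ : ℝ} {ψ : ι → Option O}

lemma exists_extendPR_sub_le (hsub : WCSubmodular f U) (hρ : 0 ≤ ρ) (hc : ∀ a, 0 ≤ c a)
    (hdens : ∀ a, a ∉ dom ψ → Dwc f U a ψ ≤ ρ * c a) {ψ' : ι → Option O}
    (hψψ' : subreal ψ ψ') {φ : ι → O} (hφ : φ ∈ U) (hψ' : consistent φ ψ') (a : ι) :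
    ∃ φ' ∈ U, consistent φ' ψ' ∧ f (extendPR ψ' a (φ' a)) - f ψ' ≤ ρ * c a := by
  by_cases ha : a ∈ dom ψ'
  · refine ⟨φ, hφ, hψ', ?_⟩
    rw [extendPR_eq_self hψ' ha, sub_self]
    exact mul_nonneg hρ (hc a)
  · obtain ⟨φ', hφ', hψ'φ', hworst⟩ := exists_extendPR_sub_eq_Dwc (f := f) hφ hψ' a
    refine ⟨φ', hφ', hψ'φ', hworst ▸ ?_⟩
    exact (hsub ψ ψ' hψψ' ⟨φ, hφ, hψ'⟩ a ha).trans
      (hdens a fun h => ha (dom_subset_of_subreal hψψ' h))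

lemma exists_unionPR_runPolicy_sub_le [Fintype ι] (hsub : WCSubmodular f U) (hρ : 0 ≤ ρ)
    (hc : ∀ a, 0 ≤ c a) (hdens : ∀ a, a ∉ dom ψ → Dwc f U a ψ ≤ ρ * c a)
    {π : (ι → Option O) → Option ι} (hπ : ValidPolicy π) (hψ : ∃ φ ∈ U, consistent φ ψ) :
    ∀ n, ∃ φ ∈ U, consistent φ ψ ∧
      f (unionPR ψ (runPolicy π φ n)) - f ψ ≤ ρ * costPR c (runPolicy π φ n)
  | 0 => by
    obtain ⟨φ, hφ, hψφ⟩ := hψ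
    refine ⟨φ, hφ, hψφ, ?_⟩
    rw [show unionPR ψ (runPolicy π φ 0) = ψ from rfl]
    simp [runPolicy, emptyPR, costPR]
  | n + 1 => by
    obtain ⟨φ, hφ, hψφ, hle⟩ := exists_unionPR_runPolicy_sub_le hsub hρ hc hdens hπ hψ n
    set χ := runPolicy π φ n
    cases hs : π χ with
    | none => exact ⟨φ, hφ, hψφ, by rwa [runPolicy_succ_of_eq_none hs]⟩
    | some a =>
      have hχφ : consistent φ χ := consistent_runPolicy π φ n
      obtain ⟨φ', hφ', hφ'cons, hstep⟩ := exists_extendPR_sub_le hsub hρ hc hdens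
        (subreal_unionPR_left hψφ hχφ) hφ (consistent_unionPR hψφ hχφ) a
      have hrun : runPolicy π φ' n = χ :=
        runPolicy_congr hπ n (consistent_of_subreal (subreal_unionPR_right ψ χ) hφ'cons)
      refine ⟨φ', hφ', consistent_of_subreal (subreal_unionPR_left hψφ hχφ) hφ'cons, ?_⟩
      rw [runPolicy_succ_of_eq_some (by rwa [hrun]), hrun, unionPR_extendPR,
        costPR_extendPR (hπ χ a hs)]
      linarith

end Adversary

theorem stmt_10_general {ι O : Type*} [Fintype ι] [DecidableEq ι] [Fintype O]
    (U : Set (ι → O))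
    (c : ι → ℝ) (hc : ∀ e, 0 < c e)
    (f : (ι → Option O) → ℝ)
    (hmono : WCMonotone f U) (hsub : WCSubmodular f U)
    (Q : ℝ) (hfull : ∀ φ ∈ U, f (toPR φ) = Q)
    (ψ : ι → Option O) (hψ : ∃ φ ∈ U, consistent φ ψ) (hfψ : f ψ < Q)
    (e : ι) (he : e ∉ dom ψ)
    (hmax : ∀ e', e' ∉ dom ψ → Dwc f U e' ψ / c e' ≤ Dwc f U e ψ / c e)
    (πs : (ι → Option O) → Option ι) (hπs : ValidPolicy πs)
    (hcov : Covers f U πs Q) :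
    c e ≤ cwc c U πs := by
  set D := Dwc f U e ψ
  have hρ : 0 ≤ D / c e := div_nonneg (hmono ψ hψ e he) (hc e).le
  have hdens : ∀ a, a ∉ dom ψ → Dwc f U a ψ ≤ D / c e * c a :=
    fun a ha => (div_le_iff₀ (hc a)).mp (hmax a ha)
  obtain ⟨φ, hφ, hψφ, hadv⟩ := exists_unionPR_runPolicy_sub_le hsub hρ (fun a => (hc a).le)
    hdens hπs hψ (Fintype.card ι)
  set χ := runPolicy πs φ (Fintype.card ι)
  have hχφ : consistent φ χ := consistent_runPolicy πs φ _
  have hcover : Q ≤ f (unionPR ψ χ) := (hcov φ hφ).trans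
    (hmono.le_of_subreal hφ hχφ (consistent_unionPR hψφ hχφ) (subreal_unionPR_right ψ χ))
  have hgap : D ≤ Q - f ψ := Dwc_le_sub_of_toPR_eq hmono hfull hψ e
  have hcost : (Q - f ψ) * c e ≤ (Q - f ψ) * costPR c χ :=
    calc (Q - f ψ) * c e ≤ D / c e * costPR c χ * c e :=
          mul_le_mul_of_nonneg_right (by linarith) (hc e).le
      _ = D * costPR c χ := by field_simp [(hc e).ne']
      _ ≤ (Q - f ψ) * costPR c χ :=
          mul_le_mul_of_nonneg_right hgap (costPR_nonneg (fun a => (hc a).le) χ)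
  exact (le_of_mul_le_mul_left hcost (sub_pos.2 hfψ)).trans (costPR_finalPR_le_cwc hφ)

/-- **Greedy never selects an item costlier than the optimum.** Suppose `f` is
worst-case monotone and worst-case submodular and `f φ = Q` for every `φ ∈ U`.
Let `ψ` be a partial realization consistent with some realization in `U` with
`f ψ < Q`, and let `e ∈ E \ dom ψ` maximize `Δwc(·|ψ)/c(·)` over `E \ dom ψ`.
Then `c e ≤ c_wc(π*)` for every adaptive policy `π*` covering `Q`. -/
theorem stmt_10 {ι O : Type*} [Fintype ι] [Nonempty ι] [DecidableEq ι] [Fintype O]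
    (U : Set (ι → O)) (hU : U.Nonempty)
    (c : ι → ℝ) (hc : ∀ e, 0 < c e)
    (f : (ι → Option O) → ℝ) (hf0 : ∀ ψ, 0 ≤ f ψ)
    (hmono : WCMonotone f U) (hsub : WCSubmodular f U)
    (Q : ℝ) (hfull : ∀ φ ∈ U, f (toPR φ) = Q)
    (ψ : ι → Option O) (hψ : ∃ φ ∈ U, consistent φ ψ) (hfψ : f ψ < Q)
    (e : ι) (he : e ∉ dom ψ)
    (hmax : ∀ e', e' ∉ dom ψ → Dwc f U e' ψ / c e' ≤ Dwc f U e ψ / c e)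
    (πs : (ι → Option O) → Option ι) (hπs : ValidPolicy πs)
    (hcov : Covers f U πs Q) :
    c e ≤ cwc c U πs :=
  stmt_10_general U c hc f hmono hsub Q hfull ψ hψ hfψ e he hmax πs hπs hcov

end WCAS
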